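/- Let K₀ satisfy (f^i−f^j)∂_i∂_j K₀ = ∂_j K₀ ∂_i g^i − ∂_i K₀ ∂_j g^j, and suppose K₁ is a smooth function with ∂_i K₁ = f^i ∂_i K₀ − K₀ ∂_i g^i for all i (a local primitive of d_L K₀ − K₀ da). Then K₁ also satisfies the same equation: (f^i−f^j)∂_i∂_j K₁ = ∂_j K₁ ∂_i g^i − ∂_i K₁ ∂_j g^j for all i ≠ j. -/

import Mathlib

noncomputable def pd {n : ℕ} (i : Fin n) (F : (Fin n → ℝ) → ℝ) (u : Fin n → ℝ) : ℝ :=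
  fderiv ℝ F u (Pi.single i 1)

lemma pd_contDiff {n : ℕ} (i : Fin n) {F : (Fin n → ℝ) → ℝ} (hF : ContDiff ℝ (⊤ : ℕ∞) F) :
    ContDiff ℝ (⊤ : ℕ∞) (pd i F) := by
  have h := (contDiff_infty_iff_fderiv.mp (hF.of_le (by simp))).2
  exact h.clm_apply contDiff_const

lemma pd_eval {n : ℕ} {i j : Fin n} (hij : i ≠ j) {φ : ℝ → ℝ}
    (hφ : Differentiable ℝ φ) (u : Fin n → ℝ) :
    pd i (fun v => φ (v j)) u = 0 := by
  unfold pd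
  have heq : (fun v : Fin n → ℝ => φ (v j)) = φ ∘ (ContinuousLinearMap.proj j (R := ℝ) (φ := fun _ : Fin n => ℝ)) := rfl
  rw [heq, fderiv_comp u (hφ (u j)) (ContinuousLinearMap.proj j (R := ℝ) (φ := fun _ : Fin n => ℝ)).differentiableAt,
    ContinuousLinearMap.fderiv]
  simp [Pi.single_eq_of_ne (Ne.symm hij)]

lemma pd_mul {n : ℕ} (i : Fin n) {F G : (Fin n → ℝ) → ℝ} {u : Fin n → ℝ}
    (hF : DifferentiableAt ℝ F u) (hG : DifferentiableAt ℝ G u) :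
    pd i (fun v => F v * G v) u = pd i F u * G u + F u * pd i G u := by
  unfold pd
  rw [fderiv_fun_mul hF hG]
  simp
  ring

lemma pd_sub {n : ℕ} (i : Fin n) {F G : (Fin n → ℝ) → ℝ} {u : Fin n → ℝ}
    (hF : DifferentiableAt ℝ F u) (hG : DifferentiableAt ℝ G u) :
    pd i (fun v => F v - G v) u = pd i F u - pd i G u := by
  unfold pd
  rw [fderiv_fun_sub hF hG]
  simp

/-- Inductive step of the recursion `dK_{l+1} = d_L K_l − K_l da`: if `K₀` solves the
cohomological equation and `∂_i K₁ = f^i ∂_i K₀ − K₀ ∂_i g^i` for all `i`, then `K₁`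
solves the cohomological equation as well. -/
theorem stmt5 {n : ℕ} (U : Set (Fin n → ℝ)) (hU : IsOpen U)
    (f g : Fin n → ℝ → ℝ) (hf : ∀ i, ContDiff ℝ (⊤ : ℕ∞) (f i)) (hg : ∀ i, ContDiff ℝ (⊤ : ℕ∞) (g i))
    (K₀ K₁ : (Fin n → ℝ) → ℝ) (hK₀ : ContDiff ℝ (⊤ : ℕ∞) K₀) (hK₁ : ContDiff ℝ (⊤ : ℕ∞) K₁)
    (hK₀eq : ∀ i j : Fin n, i ≠ j → ∀ u ∈ U,
      (f i (u i) - f j (u j)) * pd i (pd j K₀) u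
        = pd j K₀ u * deriv (g i) (u i) - pd i K₀ u * deriv (g j) (u j))
    (hrec : ∀ i : Fin n, ∀ u ∈ U,
      pd i K₁ u = f i (u i) * pd i K₀ u - K₀ u * deriv (g i) (u i)) :
    ∀ i j : Fin n, i ≠ j → ∀ u ∈ U,
      (f i (u i) - f j (u j)) * pd i (pd j K₁) u
        = pd j K₁ u * deriv (g i) (u i) - pd i K₁ u * deriv (g j) (u j) := by
  intro i j hij u hu
  have hmem : U ∈ nhds u := hU.mem_nhds hu
  -- differentiability facts
  have hfj : Differentiable ℝ (f j) := (hf j).differentiable (by simp)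
  have hgj' : Differentiable ℝ (deriv (g j)) :=
    ((contDiff_infty_iff_deriv.mp ((hg j).of_le (by simp))).2).differentiable (by simp)
  have hAj : DifferentiableAt ℝ (fun v : Fin n → ℝ => f j (v j)) u :=
    (hfj (u j)).comp u (ContinuousLinearMap.proj j (R := ℝ)
      (φ := fun _ : Fin n => ℝ)).differentiableAt
  have hDj : DifferentiableAt ℝ (fun v : Fin n → ℝ => deriv (g j) (v j)) u :=
    (hgj' (u j)).comp (g := deriv (g j)) u (ContinuousLinearMap.proj j (R := ℝ)
      (φ := fun _ : Fin n => ℝ)).differentiableAt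
  have hB : DifferentiableAt ℝ (pd j K₀) u :=
    ((pd_contDiff j hK₀).differentiable (by simp)).differentiableAt
  have hC : DifferentiableAt ℝ K₀ u := (hK₀.differentiable (by simp)).differentiableAt
  -- rewrite the second derivative using the recursion relation near u
  have hev : (pd j K₁) =ᶠ[nhds u]
      (fun v => f j (v j) * pd j K₀ v - K₀ v * deriv (g j) (v j)) :=
    Filter.eventually_of_mem hmem (fun v hv => hrec j v hv)
  have h1 : pd i (pd j K₁) u
      = pd i (fun v => f j (v j) * pd j K₀ v - K₀ v * deriv (g j) (v j)) u :=
    congrArg (fun L : (Fin n → ℝ) →L[ℝ] ℝ => L (Pi.single i 1)) hev.fderiv_eq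
  have h2 : pd i (fun v => f j (v j) * pd j K₀ v - K₀ v * deriv (g j) (v j)) u
      = f j (u j) * pd i (pd j K₀) u - pd i K₀ u * deriv (g j) (u j) := by
    rw [pd_sub i (hAj.fun_mul hB) (hC.fun_mul hDj), pd_mul i hAj hB, pd_mul i hC hDj,
      pd_eval hij hfj u, pd_eval hij hgj' u]
    ring
  have H := hK₀eq i j hij u hu
  rw [h1, h2, hrec i u hu, hrec j u hu]
  linear_combination (f j (u j)) * H
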